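/- The homogeneous polynomial F ∈ ℂ[z₀, z₁, z₂, z₃] of degree 9 given by F = z₂⁹ − 5z₀z₂⁷z₃ + 2z₁z₂⁷z₃ + 4z₂⁸z₃ + 6z₀²z₂⁵z₃² − 5z₀z₁z₂⁵z₃² + z₁²z₂⁵z₃² − 11z₀z₂⁶z₃² + 6z₁z₂⁶z₃² + 6z₂⁷z₃² + z₀³z₂³z₃³ + 9z₀²z₂⁴z₃³ − 11z₀z₁z₂⁴z₃³ + 3z₁²z₂⁴z₃³ − 7z₀z₂⁵z₃³ + 6z₁z₂⁵z₃³ + 2z₂⁶z₃³ + 3z₀²z₂³z₃⁴ − 7z₀z₁z₂³z₃⁴ + 3z₁²z₂³z₃⁴ + 4z₀z₂⁴z₃⁴ − 5z₂⁵z₃⁴ − z₀z₁z₂²z₃⁵ + z₁²z₂²z₃⁵ + 11z₀z₂³z₃⁵ − 6z₁z₂³z₃⁵ − 5z₂⁴z₃⁵ + 7z₀z₂²z₃⁶ − 6z₁z₂²z₃⁶ + 2z₂³z₃⁶ + z₀z₂z₃⁷ − 2z₁z₂z₃⁷ + 6z₂²z₃⁷ + 4z₂z₃⁸ + z₃⁹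 is irreducible in ℂ[z₀, z₁, z₂, z₃]. -/

import Mathlib

/-!
As a polynomial in `z₁` over `ℂ[z₀, z₂, z₃]`, `F = a z₁² + b z₁ + c` is quadratic. Its leading
coefficient `a = z₂² z₃² (z₂ + z₃)³` is coprime to `c`, because `c` vanishes identically on none
of `z₂ = 0`, `z₃ = 0`, `z₂ + z₃ = 0`; so `F` has no nonunit factor of degree `0` in `z₁`. A
factorization into two factors linear in `z₁` would make the discriminant `b² - 4ac` a square,
but on the line `z₂ = z₃ = 1` it restricts to `-32 z₀³ - 512`, which has odd degree.
-/

open MvPolynomial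

set_option maxHeartbeats 1000000

/-- The degree-9 homogeneous polynomial `F ∈ ℂ[z₀,z₁,z₂,z₃]` defining the image of the
tricanonical map, with `X 0 = z₀`, `X 1 = z₁`, `X 2 = z₂`, `X 3 = z₃`. -/
noncomputable def tricanF : MvPolynomial (Fin 4) ℂ :=
  (X 2) ^ 9
  - 5 * (X 0 * (X 2) ^ 7 * X 3) + 2 * (X 1 * (X 2) ^ 7 * X 3) + 4 * ((X 2) ^ 8 * X 3)
  + 6 * ((X 0) ^ 2 * (X 2) ^ 5 * (X 3) ^ 2) - 5 * (X 0 * X 1 * (X 2) ^ 5 * (X 3) ^ 2)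
  + (X 1) ^ 2 * (X 2) ^ 5 * (X 3) ^ 2 - 11 * (X 0 * (X 2) ^ 6 * (X 3) ^ 2)
  + 6 * (X 1 * (X 2) ^ 6 * (X 3) ^ 2) + 6 * ((X 2) ^ 7 * (X 3) ^ 2)
  + (X 0) ^ 3 * (X 2) ^ 3 * (X 3) ^ 3 + 9 * ((X 0) ^ 2 * (X 2) ^ 4 * (X 3) ^ 3)
  - 11 * (X 0 * X 1 * (X 2) ^ 4 * (X 3) ^ 3) + 3 * ((X 1) ^ 2 * (X 2) ^ 4 * (X 3) ^ 3)
  - 7 * (X 0 * (X 2) ^ 5 * (X 3) ^ 3) + 6 * (X 1 * (X 2) ^ 5 * (X 3) ^ 3)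
  + 2 * ((X 2) ^ 6 * (X 3) ^ 3)
  + 3 * ((X 0) ^ 2 * (X 2) ^ 3 * (X 3) ^ 4) - 7 * (X 0 * X 1 * (X 2) ^ 3 * (X 3) ^ 4)
  + 3 * ((X 1) ^ 2 * (X 2) ^ 3 * (X 3) ^ 4) + 4 * (X 0 * (X 2) ^ 4 * (X 3) ^ 4)
  - 5 * ((X 2) ^ 5 * (X 3) ^ 4)
  - X 0 * X 1 * (X 2) ^ 2 * (X 3) ^ 5 + (X 1) ^ 2 * (X 2) ^ 2 * (X 3) ^ 5
  + 11 * (X 0 * (X 2) ^ 3 * (X 3) ^ 5) - 6 * (X 1 * (X 2) ^ 3 * (X 3) ^ 5)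
  - 5 * ((X 2) ^ 4 * (X 3) ^ 5)
  + 7 * (X 0 * (X 2) ^ 2 * (X 3) ^ 6) - 6 * (X 1 * (X 2) ^ 2 * (X 3) ^ 6)
  + 2 * ((X 2) ^ 3 * (X 3) ^ 6)
  + X 0 * X 2 * (X 3) ^ 7 - 2 * (X 1 * X 2 * (X 3) ^ 7) + 6 * ((X 2) ^ 2 * (X 3) ^ 7)
  + 4 * (X 2 * (X 3) ^ 8) + (X 3) ^ 9

theorem not_dvd_of_map_eq_zero {R S F : Type*} [CommSemiring R] [CommSemiring S]
    [FunLike F R S] [MonoidHomClass F R S] (f : F) {p q : R} (hp : f p = 0) (hq : f q ≠ 0) :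
    ¬ p ∣ q :=
  fun h => hq (zero_dvd_iff.mp (hp ▸ map_dvd f h))

namespace Polynomial

theorem even_natDegree_of_isSquare {R : Type*} [Semiring R] [NoZeroDivisors R] {p : R[X]}
    (hp : IsSquare p) : Even p.natDegree := by
  obtain ⟨r, rfl⟩ := hp
  rcases eq_or_ne r 0 with rfl | hr
  · simp
  · exact ⟨_, natDegree_mul hr hr⟩

theorem irreducible_quadratic_of_not_isSquare_discrim {R : Type*} [CommRing R] [IsDomain R]
    {a b c : R} (hac : IsRelPrime a c) (hd : ¬ IsSquare (discrim a b c)) :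
    Irreducible (C a * X ^ 2 + C b * X + C c) := by
  set P := C a * X ^ 2 + C b * X + C c
  have ha : a ≠ 0 := by
    rintro rfl
    exact hd ⟨b, by simp [discrim, sq]⟩
  have hdeg : P.natDegree = 2 := natDegree_quadratic ha
  have hP0 : P ≠ 0 := ne_zero_of_natDegree_gt (n := 0) (by omega)
  refine ⟨fun hu => by simp [natDegree_eq_zero_of_isUnit hu] at hdeg, fun G H hGH => ?_⟩
  wlog hle : G.natDegree ≤ H.natDegree generalizing G H
  · exact (this H G (by rw [hGH, mul_comm]) (by omega)).symm
  have hsum : G.natDegree + H.natDegree = 2 := by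
    rw [← natDegree_mul (left_ne_zero_of_mul (hGH ▸ hP0)) (right_ne_zero_of_mul (hGH ▸ hP0)),
      ← hGH, hdeg]
  obtain hG | ⟨hG, hH⟩ : G.natDegree = 0 ∨ (G.natDegree = 1 ∧ H.natDegree = 1) := by omega
  · obtain ⟨g, rfl⟩ := natDegree_eq_zero.mp hG
    have hgP : ∀ n, g ∣ P.coeff n := (C_dvd_iff_dvd_coeff g P).mp ⟨H, hGH⟩
    exact .inl (isUnit_C.mpr (hac (by simpa [P] using hgP 2) (by simpa [P] using hgP 0)))
  · have hlin : ∀ g₁ g₀ h₁ h₀ : R, (C g₁ * X + C g₀) * (C h₁ * X + C h₀) =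
        C (g₁ * h₁) * X ^ 2 + C (g₁ * h₀ + g₀ * h₁) * X + C (g₀ * h₀) := by
      intros; simp only [map_mul, map_add]; ring
    rw [eq_X_add_C_of_natDegree_le_one hG.le, eq_X_add_C_of_natDegree_le_one hH.le, hlin] at hGH
    have h₂ := congrArg (coeff · 2) hGH
    have h₁ := congrArg (coeff · 1) hGH
    have h₀ := congrArg (coeff · 0) hGH
    simp [P, -map_mul] at h₂ h₁ h₀
    refine (hd ⟨G.coeff 1 * H.coeff 0 - G.coeff 0 * H.coeff 1, ?_⟩).elim
    rw [discrim, h₂, h₁, h₀]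
    ring

end Polynomial

namespace tricanF

/- `splitZ₁` sends `z₁` to the polynomial variable and `z₀, z₂, z₃` to `X 0, X 1, X 2`; this is the
naming of the variables in `a`, `b`, `c` below. -/
noncomputable def splitZ₁ : MvPolynomial (Fin 4) ℂ ≃ₐ[ℂ] Polynomial (MvPolynomial (Fin 3) ℂ) :=
  (renameEquiv ℂ (Equiv.swap 0 1)).trans (finSuccEquiv ℂ 3)

theorem splitZ₁_X_succ {i : Fin 4} {j : Fin 3} (hi : Equiv.swap 0 1 i = j.succ) :
    splitZ₁ (X i) = Polynomial.C (X j) := by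
  rw [splitZ₁, AlgEquiv.trans_apply, renameEquiv_apply, rename_X, hi, finSuccEquiv_X_succ]

theorem splitZ₁_X_one : splitZ₁ (X 1) = Polynomial.X := by
  rw [splitZ₁, AlgEquiv.trans_apply, renameEquiv_apply, rename_X, Equiv.swap_apply_right,
    finSuccEquiv_X_zero]

noncomputable def a : MvPolynomial (Fin 3) ℂ := X 1 ^ 2 * X 2 ^ 2 * (X 1 + X 2) ^ 3

noncomputable def b : MvPolynomial (Fin 3) ℂ :=
  -(5*(X 0*X 1^5*X 2^2)) - 11*(X 0*X 1^4*X 2^3) - 7*(X 0*X 1^3*X 2^4) - X 0*X 1^2*X 2^5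
  + 2*(X 1^7*X 2) + 6*(X 1^6*X 2^2) + 6*(X 1^5*X 2^3) - 6*(X 1^3*X 2^5)
  - 6*(X 1^2*X 2^6) - 2*(X 1*X 2^7)

noncomputable def c : MvPolynomial (Fin 3) ℂ :=
  X 0^3*X 1^3*X 2^3 + 6*(X 0^2*X 1^5*X 2^2) + 9*(X 0^2*X 1^4*X 2^3) + 3*(X 0^2*X 1^3*X 2^4)
  - 5*(X 0*X 1^7*X 2) - 11*(X 0*X 1^6*X 2^2) - 7*(X 0*X 1^5*X 2^3) + 4*(X 0*X 1^4*X 2^4)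
  + 11*(X 0*X 1^3*X 2^5) + 7*(X 0*X 1^2*X 2^6) + X 0*X 1*X 2^7
  + X 1^9 + 4*(X 1^8*X 2) + 6*(X 1^7*X 2^2) + 2*(X 1^6*X 2^3) - 5*(X 1^5*X 2^4)
  - 5*(X 1^4*X 2^5) + 2*(X 1^3*X 2^6) + 6*(X 1^2*X 2^7) + 4*(X 1*X 2^8) + X 2^9

theorem splitZ₁_tricanF :
    splitZ₁ tricanF =
      Polynomial.C a * Polynomial.X ^ 2 + Polynomial.C b * Polynomial.X + Polynomial.C c := by
  rw [tricanF, a, b, c]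
  simp only [map_add, map_sub, map_mul, map_pow, map_ofNat, map_neg, splitZ₁_X_one,
    splitZ₁_X_succ (i := 0) (j := 0) (by decide), splitZ₁_X_succ (i := 2) (j := 1) (by decide),
    splitZ₁_X_succ (i := 3) (j := 2) (by decide)]
  ring

theorem isRelPrime_a_c : IsRelPrime a c := by
  have hz₂ : Irreducible (X 1 : MvPolynomial (Fin 3) ℂ) := X_prime.irreducible
  have hz₃ : Irreducible (X 2 : MvPolynomial (Fin 3) ℂ) := X_prime.irreducible
  have hz₂z₃ : Irreducible (X 1 + X 2 : MvPolynomial (Fin 3) ℂ) := by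
    simpa [add_comm] using irreducible_mul_X_add 1 (X 1) 2 one_ne_zero (by simp)
      (by simp [vars_X]) isRelPrime_one_left
  refine .mul_left (.mul_left ?_ ?_) ?_ <;> refine .pow_left ?_
  · exact hz₂.isRelPrime_iff_not_dvd.mpr
      (not_dvd_of_map_eq_zero (eval ![0, 0, 1]) (by simp) (by simp [c]))
  · exact hz₃.isRelPrime_iff_not_dvd.mpr
      (not_dvd_of_map_eq_zero (eval ![0, 1, 0]) (by simp) (by simp [c]))
  · exact hz₂z₃.isRelPrime_iff_not_dvd.mpr
      (not_dvd_of_map_eq_zero (eval ![1, 1, -1]) (by simp) (by simp [c]; norm_num))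

theorem not_isSquare_discrim : ¬ IsSquare (discrim a b c) := by
  intro h
  have hline : aeval (![Polynomial.X, 1, 1] : Fin 3 → Polynomial ℂ) (discrim a b c) =
      -32 * Polynomial.X ^ 3 - 512 := by
    simp [discrim, a, b, c]
    ring
  have hdeg : (-32 * Polynomial.X ^ 3 - 512 : Polynomial ℂ).natDegree = 3 := by compute_degree!
  have heven := Polynomial.even_natDegree_of_isSquare
    (h.map (aeval (![Polynomial.X, 1, 1] : Fin 3 → Polynomial ℂ)))
  rw [hline, hdeg] at heven
  exact Nat.not_even_iff_odd.mpr (by decide) heven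

end tricanF

/-- The degree-9 polynomial `F` is irreducible in `ℂ[z₀,z₁,z₂,z₃]`. -/
theorem stmt_9 : Irreducible tricanF := by
  rw [← MulEquiv.irreducible_iff tricanF.splitZ₁, tricanF.splitZ₁_tricanF]
  exact Polynomial.irreducible_quadratic_of_not_isSquare_discrim tricanF.isRelPrime_a_c
    tricanF.not_isSquare_discrim
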